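/- For an antichain Γ in the poset Δ⁺ of positive roots of type A_n, the OY-number satisfies 𝒴(Γ) = 0 if and only if Γ lies in the standard 𝔛-orbit, i.e., if and only if Γ = ∅ or Γ = Δ(m) for some 1 ≤ m ≤ n, where Δ(m) = {(i,j) : j − i + 1 = m} is the set of positive roots of height m. -/
import Mathlib


open Finset

/-- The root order on pairs: `(i,j) ≼ (i',j')` iff `i' ≤ i` and `j ≤ j'`. -/
def rle (p q : ℕ × ℕ) : Prop := q.1 ≤ p.1 ∧ p.2 ≤ q.2

instance : DecidableRel rle := fun p q =>
  inferInstanceAs (Decidable (q.1 ≤ p.1 ∧ p.2 ≤ q.2))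

/-- The positive roots of type `A_n`, modelled as pairs `(i,j)` with `1 ≤ i ≤ j ≤ n`. -/
def roots (n : ℕ) : Finset (ℕ × ℕ) :=
  ((Finset.Icc 1 n) ×ˢ (Finset.Icc 1 n)).filter (fun p => p.1 ≤ p.2)

/-- `Γ` is an antichain in `Δ⁺(A_n)`: a set of pairwise incomparable positive roots. -/
def IsAC (n : ℕ) (Γ : Finset (ℕ × ℕ)) : Prop :=
  Γ ⊆ roots n ∧ ∀ p ∈ Γ, ∀ q ∈ Γ, rle p q → p = q

/-- The upper ideal `I(Γ) = {x ∈ Δ⁺ : ∃ γ ∈ Γ, γ ≼ x}` generated by `Γ`. -/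
def upIdeal (n : ℕ) (Γ : Finset (ℕ × ℕ)) : Finset (ℕ × ℕ) :=
  (roots n).filter (fun x => ∃ γ ∈ Γ, rle γ x)

/-- The set of maximal elements of `S` with respect to the root order. -/
def maxOf (S : Finset (ℕ × ℕ)) : Finset (ℕ × ℕ) :=
  S.filter (fun x => ∀ y ∈ S, rle x y → y = x)

/-- The set of minimal elements of `S` with respect to the root order. -/
def minOf (S : Finset (ℕ × ℕ)) : Finset (ℕ × ℕ) :=
  S.filter (fun x => ∀ y ∈ S, rle y x → y = x)

/-- The reverse operator `𝔛`, sending an antichain `Γ` to the set of maximal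
elements of `Δ⁺ \ I(Γ)`. -/
def Xrev (n : ℕ) (Γ : Finset (ℕ × ℕ)) : Finset (ℕ × ℕ) :=
  maxOf (roots n \ upIdeal n Γ)

/-- `r_Γ(γ) = #(I(Γ) \ {γ})_min − #I(Γ)_min + 1`. -/
def rGam (n : ℕ) (Γ : Finset (ℕ × ℕ)) (γ : ℕ × ℕ) : ℤ :=
  ((minOf (upIdeal n Γ \ {γ})).card : ℤ) - ((minOf (upIdeal n Γ)).card : ℤ) + 1

/-- The OY-number `𝒴(Γ) = Σ_{γ ∈ Γ} r_Γ(γ)`; in particular `𝒴(∅) = 0`. -/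
def OY (n : ℕ) (Γ : Finset (ℕ × ℕ)) : ℤ := ∑ γ ∈ Γ, rGam n Γ γ

lemma mem_roots' {n : ℕ} {p : ℕ × ℕ} :
    p ∈ roots n ↔ 1 ≤ p.1 ∧ p.1 ≤ p.2 ∧ p.2 ≤ n := by
  simp only [roots, mem_filter, mem_product, Finset.mem_Icc]
  omega

lemma rle_refl (p : ℕ × ℕ) : rle p p := ⟨le_refl _, le_refl _⟩

lemma rle_trans {p q r : ℕ × ℕ} (h1 : rle p q) (h2 : rle q r) : rle p r :=
  ⟨le_trans h2.1 h1.1, le_trans h1.2 h2.2⟩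

lemma rle_antisymm {p q : ℕ × ℕ} (h1 : rle p q) (h2 : rle q p) : p = q := by
  obtain ⟨a,b⟩ := h1; obtain ⟨c,d⟩ := h2
  exact Prod.ext (le_antisymm c a) (le_antisymm b d)

lemma mem_upIdeal {n : ℕ} {Γ : Finset (ℕ × ℕ)} {x : ℕ × ℕ} :
    x ∈ upIdeal n Γ ↔ x ∈ roots n ∧ ∃ γ ∈ Γ, rle γ x := by
  simp [upIdeal, mem_filter]

lemma mem_minOf {S : Finset (ℕ × ℕ)} {x : ℕ × ℕ} :
    x ∈ minOf S ↔ x ∈ S ∧ ∀ y ∈ S, rle y x → y = x := by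
  simp [minOf, mem_filter]

lemma strict_dec {n : ℕ} {x y : ℕ × ℕ} (hx : x ∈ roots n) (hy : y ∈ roots n)
    (h : rle y x) (hne : y ≠ x) : y.2 - y.1 < x.2 - x.1 := by
  rw [mem_roots'] at hx hy
  obtain ⟨a, b⟩ := h
  have : ¬(y.1 = x.1 ∧ y.2 = x.2) := fun ⟨h1, h2⟩ => hne (Prod.ext h1 h2)
  omega

lemma exists_min_below {n : ℕ} {S : Finset (ℕ × ℕ)} (hS : S ⊆ roots n) :
    ∀ x ∈ S, ∃ m ∈ minOf S, rle m x := by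
  have H : ∀ k, ∀ x ∈ S, x.2 - x.1 ≤ k → ∃ m ∈ minOf S, rle m x := by
    intro k
    induction k with
    | zero =>
      intro x hx hk
      refine ⟨x, mem_minOf.2 ⟨hx, fun y hy hyx => ?_⟩, rle_refl x⟩
      by_contra hne
      have := strict_dec (hS hx) (hS hy) hyx hne
      omega
    | succ k ih =>
      intro x hx hk
      by_cases hmin : ∀ y ∈ S, rle y x → y = x
      · exact ⟨x, mem_minOf.2 ⟨hx, hmin⟩, rle_refl x⟩
      · push_neg at hmin
        obtain ⟨y, hy, hyx, hne⟩ := hmin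
        have hd := strict_dec (hS hx) (hS hy) hyx hne
        obtain ⟨m, hm, hmy⟩ := ih y hy (by omega)
        exact ⟨m, hm, rle_trans hmy hyx⟩
  exact fun x hx => H (x.2 - x.1) x hx le_rfl

lemma minOf_upIdeal {n : ℕ} {Γ : Finset (ℕ × ℕ)} (hΓ : IsAC n Γ) :
    minOf (upIdeal n Γ) = Γ := by
  ext x
  rw [mem_minOf, mem_upIdeal]
  constructor
  · rintro ⟨⟨hx, γ, hγ, hγx⟩, hmin⟩
    have : γ = x := hmin γ (mem_upIdeal.2 ⟨hΓ.1 hγ, γ, hγ, rle_refl γ⟩) hγx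
    rwa [this] at hγ
  · intro hx
    refine ⟨⟨hΓ.1 hx, x, hx, rle_refl x⟩, fun y hy hyx => ?_⟩
    rw [mem_upIdeal] at hy
    obtain ⟨hyT, γ, hγ, hγy⟩ := hy
    have := hΓ.2 γ hγ x hx (rle_trans hγy hyx)
    subst this
    exact rle_antisymm hyx hγy

lemma erase_subset_minOf {n : ℕ} {Γ : Finset (ℕ × ℕ)} (hΓ : IsAC n Γ) {γ : ℕ × ℕ}
    (hγ : γ ∈ Γ) : Γ.erase γ ⊆ minOf (upIdeal n Γ \ {γ}) := by
  intro x hx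
  obtain ⟨hne, hxΓ⟩ := Finset.mem_erase.1 hx
  rw [mem_minOf]
  constructor
  · rw [Finset.mem_sdiff, Finset.mem_singleton]
    exact ⟨mem_upIdeal.2 ⟨hΓ.1 hxΓ, x, hxΓ, rle_refl x⟩, hne⟩
  · intro y hy hyx
    rw [Finset.mem_sdiff] at hy
    obtain ⟨hyT, γ', hγ', hγ'y⟩ := mem_upIdeal.1 hy.1
    have := hΓ.2 γ' hγ' x hxΓ (rle_trans hγ'y hyx)
    subst this
    exact rle_antisymm hyx hγ'y
/-- The key property extracted from `rGam = 0`. -/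
def Qprop (n : ℕ) (Γ : Finset (ℕ × ℕ)) : Prop :=
  ∀ γ ∈ Γ, ∀ x ∈ upIdeal n Γ, x ≠ γ → ∃ γ' ∈ Γ, γ' ≠ γ ∧ rle γ' x

lemma rGam_nonneg {n : ℕ} {Γ : Finset (ℕ × ℕ)} (hΓ : IsAC n Γ) {γ : ℕ × ℕ}
    (hγ : γ ∈ Γ) : 0 ≤ rGam n Γ γ := by
  have h1 := Finset.card_le_card (erase_subset_minOf hΓ hγ)
  rw [Finset.card_erase_of_mem hγ] at h1
  have h2 : (minOf (upIdeal n Γ)).card = Γ.card := by rw [minOf_upIdeal hΓ]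
  have h3 : 1 ≤ Γ.card := Finset.card_pos.2 ⟨γ, hγ⟩
  unfold rGam
  omega

lemma rGam_zero_iff {n : ℕ} {Γ : Finset (ℕ × ℕ)} (hΓ : IsAC n Γ) {γ : ℕ × ℕ}
    (hγ : γ ∈ Γ) :
    rGam n Γ γ = 0 ↔ minOf (upIdeal n Γ \ {γ}) = Γ.erase γ := by
  have h2 : (minOf (upIdeal n Γ)).card = Γ.card := by rw [minOf_upIdeal hΓ]
  have h3 : 1 ≤ Γ.card := Finset.card_pos.2 ⟨γ, hγ⟩
  constructor
  · intro h0
    unfold rGam at h0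
    rw [h2] at h0
    have hcard : (minOf (upIdeal n Γ \ {γ})).card = Γ.card - 1 := by omega
    exact ((Finset.eq_of_subset_of_card_le (erase_subset_minOf hΓ hγ)
      (by rw [hcard, Finset.card_erase_of_mem hγ]))).symm
  · intro h
    unfold rGam
    rw [h, h2, Finset.card_erase_of_mem hγ]
    omega

lemma OY_zero_iff {n : ℕ} {Γ : Finset (ℕ × ℕ)} (hΓ : IsAC n Γ) :
    OY n Γ = 0 ↔ ∀ γ ∈ Γ, minOf (upIdeal n Γ \ {γ}) = Γ.erase γ := by
  unfold OY
  rw [Finset.sum_eq_zero_iff_of_nonneg (fun γ hγ => rGam_nonneg hΓ hγ)]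
  exact ⟨fun h γ hγ => (rGam_zero_iff hΓ hγ).1 (h γ hγ),
    fun h γ hγ => (rGam_zero_iff hΓ hγ).2 (h γ hγ)⟩

lemma Qprop_of {n : ℕ} {Γ : Finset (ℕ × ℕ)} (hΓ : IsAC n Γ)
    (h : ∀ γ ∈ Γ, minOf (upIdeal n Γ \ {γ}) = Γ.erase γ) : Qprop n Γ := by
  intro γ hγ x hx hne
  have hS : upIdeal n Γ \ {γ} ⊆ roots n := fun y hy =>
    (mem_upIdeal.1 (Finset.mem_sdiff.1 hy).1).1
  have hxS : x ∈ upIdeal n Γ \ {γ} := by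
    rw [Finset.mem_sdiff, Finset.mem_singleton]; exact ⟨hx, hne⟩
  obtain ⟨m, hm, hmx⟩ := exists_min_below hS x hxS
  rw [h γ hγ] at hm
  obtain ⟨hmne, hmΓ⟩ := Finset.mem_erase.1 hm
  exact ⟨m, hmΓ, hmne, hmx⟩
lemma stepDown {n : ℕ} {Γ : Finset (ℕ × ℕ)} (hΓ : IsAC n Γ) (hQ : Qprop n Γ)
    {γ : ℕ × ℕ} (hγ : γ ∈ Γ) (h2 : 2 ≤ γ.1) : (γ.1 - 1, γ.2 - 1) ∈ Γ := by
  obtain ⟨hi1, hij, hjn⟩ := mem_roots'.1 (hΓ.1 hγ)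
  have hx : (γ.1 - 1, γ.2) ∈ upIdeal n Γ :=
    mem_upIdeal.2 ⟨mem_roots'.2 (by simp; omega), γ, hγ, by simp [rle]⟩
  have hne : (γ.1 - 1, γ.2) ≠ γ := by
    intro h; have := congrArg Prod.fst h; simp at this; omega
  obtain ⟨γ', hγ', hne', hle'⟩ := hQ γ hγ _ hx hne
  obtain ⟨ha, hb⟩ := hle'
  simp only at ha hb
  have hno1 : ¬ rle γ' γ := fun h => hne' (hΓ.2 γ' hγ' γ hγ h)
  have hno2 : ¬ rle γ γ' := fun h => hne' (hΓ.2 γ hγ γ' hγ' h).symm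
  simp only [rle, not_and, not_le] at hno1 hno2
  have h1' : γ'.1 = γ.1 - 1 := by omega
  have h2' : γ'.2 < γ.2 := by omega
  obtain ⟨hi1', hij', hjn'⟩ := mem_roots'.1 (hΓ.1 hγ')
  have hx2 : (γ.1 - 1, γ'.2 + 1) ∈ upIdeal n Γ :=
    mem_upIdeal.2 ⟨mem_roots'.2 (by simp; omega), γ', hγ', by simp [rle]; omega⟩
  have hne2 : (γ.1 - 1, γ'.2 + 1) ≠ γ' := by
    intro h; have := congrArg Prod.snd h; simp at this
  obtain ⟨γ'', hγ'', hne'', hle''⟩ := hQ γ' hγ' _ hx2 hne2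
  obtain ⟨hc, hd⟩ := hle''
  simp only at hc hd
  have hno3 : ¬ rle γ'' γ' := fun h => hne'' (hΓ.2 γ'' hγ'' γ' hγ' h)
  have hno4 : ¬ rle γ' γ'' := fun h => hne'' (hΓ.2 γ' hγ' γ'' hγ'' h).symm
  simp only [rle, not_and, not_le] at hno3 hno4
  have hgg : rle γ'' γ := ⟨by omega, by omega⟩
  have heq : γ'' = γ := hΓ.2 γ'' hγ'' γ hγ hgg
  have : γ' = (γ.1 - 1, γ.2 - 1) := by
    have h5 := congrArg Prod.snd heq
    exact Prod.ext (by omega) (by omega)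
  rwa [this] at hγ'

lemma stepUp {n : ℕ} {Γ : Finset (ℕ × ℕ)} (hΓ : IsAC n Γ) (hQ : Qprop n Γ)
    {γ : ℕ × ℕ} (hγ : γ ∈ Γ) (hj : γ.2 < n) : (γ.1 + 1, γ.2 + 1) ∈ Γ := by
  obtain ⟨hi1, hij, hjn⟩ := mem_roots'.1 (hΓ.1 hγ)
  have hx : (γ.1, γ.2 + 1) ∈ upIdeal n Γ :=
    mem_upIdeal.2 ⟨mem_roots'.2 (by simp; omega), γ, hγ, by simp [rle]⟩
  have hne : (γ.1, γ.2 + 1) ≠ γ := by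
    intro h; have := congrArg Prod.snd h; simp at this
  obtain ⟨γ', hγ', hne', hle'⟩ := hQ γ hγ _ hx hne
  obtain ⟨ha, hb⟩ := hle'
  simp only at ha hb
  have hno1 : ¬ rle γ' γ := fun h => hne' (hΓ.2 γ' hγ' γ hγ h)
  have hno2 : ¬ rle γ γ' := fun h => hne' (hΓ.2 γ hγ γ' hγ' h).symm
  simp only [rle, not_and, not_le] at hno1 hno2
  have h1' : γ'.2 = γ.2 + 1 := by omega
  have h2' : γ.1 < γ'.1 := by omega
  obtain ⟨hi1', hij', hjn'⟩ := mem_roots'.1 (hΓ.1 hγ')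
  have hx2 : (γ'.1 - 1, γ.2 + 1) ∈ upIdeal n Γ :=
    mem_upIdeal.2 ⟨mem_roots'.2 (by simp; omega), γ', hγ', by simp [rle]; omega⟩
  have hne2 : (γ'.1 - 1, γ.2 + 1) ≠ γ' := by
    intro h; have := congrArg Prod.fst h; simp at this; omega
  obtain ⟨γ'', hγ'', hne'', hle''⟩ := hQ γ' hγ' _ hx2 hne2
  obtain ⟨hc, hd⟩ := hle''
  simp only at hc hd
  have hno3 : ¬ rle γ'' γ' := fun h => hne'' (hΓ.2 γ'' hγ'' γ' hγ' h)
  have hno4 : ¬ rle γ' γ'' := fun h => hne'' (hΓ.2 γ' hγ' γ'' hγ'' h).symm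
  simp only [rle, not_and, not_le] at hno3 hno4
  have hgg : rle γ'' γ := ⟨by omega, by omega⟩
  have heq : γ'' = γ := hΓ.2 γ'' hγ'' γ hγ hgg
  have : γ' = (γ.1 + 1, γ.2 + 1) := by
    have h5 := congrArg Prod.fst heq
    exact Prod.ext (by omega) (by omega)
  rwa [this] at hγ'
lemma chainDown {n : ℕ} {Γ : Finset (ℕ × ℕ)} (hΓ : IsAC n Γ) (hQ : Qprop n Γ) :
    ∀ γ ∈ Γ, (1, γ.2 - γ.1 + 1) ∈ Γ := by
  have H : ∀ k, ∀ γ ∈ Γ, γ.1 ≤ k → (1, γ.2 - γ.1 + 1) ∈ Γ := by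
    intro k
    induction k with
    | zero =>
      intro γ hγ h
      obtain ⟨h1, _, _⟩ := mem_roots'.1 (hΓ.1 hγ)
      omega
    | succ k ih =>
      intro γ hγ h
      obtain ⟨h1, h2, h3⟩ := mem_roots'.1 (hΓ.1 hγ)
      by_cases he : γ.1 = 1
      · have : (1, γ.2 - γ.1 + 1) = γ := Prod.ext (by simp; omega) (by simp; omega)
        rwa [this]
      · have hd := stepDown hΓ hQ hγ (by omega)
        have := ih _ hd (by simp; omega)
        have heq : ((γ.1 - 1, γ.2 - 1) : ℕ × ℕ).2 - ((γ.1 - 1, γ.2 - 1) : ℕ × ℕ).1 + 1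
            = γ.2 - γ.1 + 1 := by simp; omega
        rwa [heq] at this
  exact fun γ hγ => H γ.1 γ hγ le_rfl

lemma chainUp {n : ℕ} {Γ : Finset (ℕ × ℕ)} (hΓ : IsAC n Γ) (hQ : Qprop n Γ)
    {m : ℕ} (h1m : (1, m) ∈ Γ) : ∀ t, t + m ≤ n → (t + 1, t + m) ∈ Γ := by
  intro t
  induction t with
  | zero => intro _; simpa using h1m
  | succ t ih =>
    intro ht
    have hprev := ih (by omega)
    have := stepUp hΓ hQ hprev (by simp; omega)
    simpa [Nat.add_assoc, Nat.add_comm, Nat.add_left_comm] using this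

lemma forward_struct {n : ℕ} {Γ : Finset (ℕ × ℕ)} (hΓ : IsAC n Γ) (hQ : Qprop n Γ)
    (hne : Γ.Nonempty) :
    ∃ m, 1 ≤ m ∧ m ≤ n ∧ Γ = (roots n).filter (fun p => p.2 - p.1 + 1 = m) := by
  obtain ⟨γ₀, hγ₀⟩ := hne
  set m := γ₀.2 - γ₀.1 + 1 with hm
  have h1m : (1, m) ∈ Γ := chainDown hΓ hQ γ₀ hγ₀
  obtain ⟨_, _, hmn⟩ := mem_roots'.1 (hΓ.1 h1m)
  simp only at hmn
  refine ⟨m, by omega, hmn, ?_⟩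
  ext p
  simp only [mem_filter]
  constructor
  · intro hp
    refine ⟨hΓ.1 hp, ?_⟩
    have hp1 : (1, p.2 - p.1 + 1) ∈ Γ := chainDown hΓ hQ p hp
    rcases le_total (p.2 - p.1 + 1) m with hle | hle
    · have := hΓ.2 (1, p.2 - p.1 + 1) hp1 (1, m) h1m ⟨le_rfl, hle⟩
      have := congrArg Prod.snd this
      simpa using this
    · have := hΓ.2 (1, m) h1m (1, p.2 - p.1 + 1) hp1 ⟨le_rfl, hle⟩
      have := congrArg Prod.snd this
      simp at this
      omega
  · rintro ⟨hpr, hph⟩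
    obtain ⟨h1, h2, h3⟩ := mem_roots'.1 hpr
    have := chainUp hΓ hQ h1m (p.1 - 1) (by omega)
    have heq : ((p.1 - 1 + 1, p.1 - 1 + m) : ℕ × ℕ) = p :=
      Prod.ext (by simp; omega) (by simp; omega)
    rwa [heq] at this
lemma mem_upIdeal_D {n m : ℕ} {Γ : Finset (ℕ × ℕ)} (hm1 : 1 ≤ m)
    (hD : Γ = (roots n).filter (fun p => p.2 - p.1 + 1 = m)) {y : ℕ × ℕ}
    (hy : y ∈ roots n) (hh : m ≤ y.2 - y.1 + 1) : y ∈ upIdeal n Γ := by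
  obtain ⟨h1, h2, h3⟩ := mem_roots'.1 hy
  refine mem_upIdeal.2 ⟨hy, (y.1, y.1 + m - 1), ?_, ⟨by simp, by simp; omega⟩⟩
  rw [hD, mem_filter, mem_roots']
  simp
  omega

lemma minOf_subset_erase_D {n m : ℕ} {Γ : Finset (ℕ × ℕ)} (hm1 : 1 ≤ m)
    (hD : Γ = (roots n).filter (fun p => p.2 - p.1 + 1 = m)) {γ : ℕ × ℕ}
    (hγ : γ ∈ Γ) : minOf (upIdeal n Γ \ {γ}) ⊆ Γ.erase γ := by
  intro x hx
  obtain ⟨hxS, hmin⟩ := mem_minOf.1 hx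
  rw [Finset.mem_sdiff, Finset.mem_singleton] at hxS
  obtain ⟨hxI, hxγ⟩ := hxS
  obtain ⟨hxr, γ₀, hγ₀, hγ₀x⟩ := mem_upIdeal.1 hxI
  obtain ⟨hx1, hx2, hx3⟩ := mem_roots'.1 hxr
  rw [hD, mem_filter] at hγ₀
  obtain ⟨hγ₀r, hγ₀h⟩ := hγ₀
  obtain ⟨hg1, hg2, hg3⟩ := mem_roots'.1 hγ₀r
  obtain ⟨ha, hb⟩ := hγ₀x
  have hht : m ≤ x.2 - x.1 + 1 := by omega
  by_cases hcase : x.2 - x.1 + 1 = m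
  · rw [Finset.mem_erase]
    refine ⟨hxγ, ?_⟩
    rw [hD, mem_filter]
    exact ⟨hxr, hcase⟩
  · exfalso
    have hstrict : m ≤ x.2 - x.1 := by omega
    have hy1r : ((x.1 + 1, x.2) : ℕ × ℕ) ∈ roots n := mem_roots'.2 (by simp; omega)
    have hy2r : ((x.1, x.2 - 1) : ℕ × ℕ) ∈ roots n := mem_roots'.2 (by simp; omega)
    have hy1I : ((x.1 + 1, x.2) : ℕ × ℕ) ∈ upIdeal n Γ :=
      mem_upIdeal_D hm1 hD hy1r (by simp; omega)
    have hy2I : ((x.1, x.2 - 1) : ℕ × ℕ) ∈ upIdeal n Γ :=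
      mem_upIdeal_D hm1 hD hy2r (by simp; omega)
    by_cases hc : ((x.1 + 1, x.2) : ℕ × ℕ) = γ
    · have hne : ((x.1, x.2 - 1) : ℕ × ℕ) ≠ γ := by
        rw [← hc]; intro h; have := congrArg Prod.fst h; simp at this
      have := hmin (x.1, x.2 - 1)
        (by rw [Finset.mem_sdiff, Finset.mem_singleton]; exact ⟨hy2I, hne⟩)
        ⟨by simp, by simp⟩
      have := congrArg Prod.snd this
      simp at this
      omega
    · have := hmin (x.1 + 1, x.2)
        (by rw [Finset.mem_sdiff, Finset.mem_singleton]; exact ⟨hy1I, hc⟩)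
        ⟨by simp, by simp⟩
      have := congrArg Prod.fst this
      simp at this

/-- For an antichain `Γ` in `Δ⁺(A_n)`, `𝒴(Γ) = 0` iff `Γ` lies in the standard
`𝔛`-orbit, i.e. iff `Γ = ∅` or `Γ = Δ(m)`, the set of roots of height `m`,
for some `1 ≤ m ≤ n`. -/
theorem stmt7 (n : ℕ) (hn : 1 ≤ n) (Γ : Finset (ℕ × ℕ)) (hΓ : IsAC n Γ) :
    OY n Γ = 0 ↔
      (Γ = ∅ ∨ ∃ m, 1 ≤ m ∧ m ≤ n ∧
        Γ = (roots n).filter (fun p => p.2 - p.1 + 1 = m)) := by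
  constructor
  · intro h
    by_cases hE : Γ = ∅
    · exact Or.inl hE
    · right
      exact forward_struct hΓ (Qprop_of hΓ ((OY_zero_iff hΓ).1 h))
        (Finset.nonempty_of_ne_empty hE)
  · rintro (rfl | ⟨m, hm1, hm2, hD⟩)
    · simp [OY]
    · rw [OY_zero_iff hΓ]
      intro γ hγ
      exact le_antisymm (minOf_subset_erase_D hm1 hD hγ) (erase_subset_minOf hΓ hγ)
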